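/- arXiv:2605.24752 — 4 statements merged into one kernel-verified Lean document; each statement's English description precedes it below -/
import Mathlib

section
/- Let β > 1 and define f_β(α) = H(α) + (β/2)·(2α−1)² for α ∈ (0,1). Then: (i) there is a unique q⁺_β ∈ (1/2,1) satisfying ln((1−q⁺_β)/q⁺_β) + 2β(2q⁺_β−1) = 0 and a unique q⁻_β ∈ (0,1/2) satisfying the same equation, and q⁺_β + q⁻_β = 1; (ii) f_β is strictly increasing on (0, q⁻_β), strictly decreasing on (q⁻_β, 1/2), strictly increasing on (1/2, q⁺_β), and strictly decreasing on (q⁺_β, 1); in particular q⁺_β and q⁻_β are the maximizers of f_β on (0,1); (iii) the second derivative f_β''(α) = −1/(α(1−α)) + 4β is strictly negative at both q⁺_β and q⁻_β. -/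
/-- The binary entropy function `H(α) = -α ln α - (1-α) ln(1-α)`. -/
noncomputable def binEnt (α : ℝ) : ℝ := -α * Real.log α - (1 - α) * Real.log (1 - α)

/-- The function `f_β(α) = H(α) + (β/2)(2α-1)²`. -/
noncomputable def fbeta (β α : ℝ) : ℝ := binEnt α + β / 2 * (2 * α - 1) ^ 2

/-!
`f_β'` is `g(q) = log((1 - q)/q) + 2β(2q - 1)`, which is odd about `1/2`, and
`g' = 4β - 1/(q(1 - q))` is strictly decreasing on `[1/2, 1)`, so `g` is strictly concave
there. Since `g(1/2) = 0`, `g'(1/2) = 4β - 4 > 0` and `g < 0` near `1`, the intermediate value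
theorem gives a zero `q⁺ ∈ (1/2, 1)`, and concavity (secant slopes from `1/2` decrease) makes
`g` positive on `(1/2, q⁺)` and negative on `(q⁺, 1)`. This sign pattern of `f_β'` gives the
monotonicity on `(1/2, 1)`; the symmetry `f_β(1 - α) = f_β(α)` transfers everything to
`(0, 1/2)` with `q⁻ = 1 - q⁺`. Finally `g'(q⁺) < (g(q⁺) - g(1/2)) / (q⁺ - 1/2) = 0` by strict
concavity.
-/

open Set Real Filter Topology

lemma exists_mem_Ioo_pos_of_hasDerivAt {f : ℝ → ℝ} {f' a b : ℝ} (hf : HasDerivAt f f' a)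
    (hf' : 0 < f') (ha : f a = 0) (hab : a < b) : ∃ x ∈ Ioo a b, 0 < f x := by
  have hslope : ∀ᶠ t in 𝓝[>] (0 : ℝ), 0 < t⁻¹ • (f (a + t) - f a) :=
    hf.tendsto_slope_zero_right.eventually (eventually_gt_nhds hf')
  obtain ⟨t, hpos, ht⟩ := (hslope.and (Ioo_mem_nhdsGT (sub_pos.2 hab))).exists
  rw [ha, sub_zero, smul_eq_mul] at hpos
  exact ⟨a + t, ⟨by linarith [ht.1], by linarith [ht.2]⟩,
    pos_of_mul_pos_right hpos (inv_pos.2 ht.1).le⟩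

theorem StrictConcaveOn.pos_of_eq_zero_of_eq_zero {f : ℝ → ℝ} {s : Set ℝ}
    (hf : StrictConcaveOn ℝ s f) {a c x : ℝ} (ha : a ∈ s) (hc : c ∈ s) (hx : x ∈ s)
    (hfa : f a = 0) (hfc : f c = 0) (hax : a < x) (hxc : x < c) : 0 < f x := by
  have := hf.secant_strict_mono ha hx hc hax.ne' (hax.trans hxc).ne' hxc
  rw [hfa, hfc, sub_zero, sub_zero, zero_div] at this
  exact (div_pos_iff_of_pos_right (sub_pos.2 hax)).1 this

theorem StrictConcaveOn.neg_of_eq_zero_of_eq_zero {f : ℝ → ℝ} {s : Set ℝ}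
    (hf : StrictConcaveOn ℝ s f) {a c x : ℝ} (ha : a ∈ s) (hc : c ∈ s) (hx : x ∈ s)
    (hfa : f a = 0) (hfc : f c = 0) (hac : a < c) (hcx : c < x) : f x < 0 := by
  have := hf.secant_strict_mono ha hc hx hac.ne' (hac.trans hcx).ne' hcx
  rw [hfa, hfc, sub_zero, sub_zero, zero_div] at this
  exact (div_neg_iff.1 this).resolve_left (fun h => by linarith [h.2]) |>.1

lemma binEnt_eq_binEntropy : binEnt = binEntropy := by
  ext p
  simp only [binEnt, binEntropy, log_inv]
  ring

noncomputable def fbetaDeriv (β q : ℝ) : ℝ := log ((1 - q) / q) + 2 * β * (2 * q - 1)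

noncomputable def fbetaDeriv2 (β q : ℝ) : ℝ := -(1 / (q * (1 - q))) + 4 * β

variable {β q : ℝ}

lemma fbeta_one_sub (β α : ℝ) : fbeta β (1 - α) = fbeta β α := by
  simp only [fbeta, binEnt_eq_binEntropy, binEntropy_one_sub]
  ring

lemma fbetaDeriv_one_sub (β q : ℝ) : fbetaDeriv β (1 - q) = -fbetaDeriv β q := by
  rw [fbetaDeriv, fbetaDeriv, sub_sub_cancel, ← inv_div, log_inv]
  ring

lemma fbetaDeriv2_one_sub (β q : ℝ) : fbetaDeriv2 β (1 - q) = fbetaDeriv2 β q := by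
  rw [fbetaDeriv2, fbetaDeriv2, sub_sub_cancel, mul_comm]

lemma fbetaDeriv_half (β : ℝ) : fbetaDeriv β (1 / 2) = 0 := by
  norm_num [fbetaDeriv]

lemma fbetaDeriv_eq (β : ℝ) (h0 : q ≠ 0) (h1 : q ≠ 1) :
    fbetaDeriv β q = log (1 - q) - log q + 2 * β * (2 * q - 1) := by
  rw [fbetaDeriv, log_div (sub_ne_zero.2 h1.symm) h0]

lemma hasDerivAt_fbeta (β : ℝ) (h0 : q ≠ 0) (h1 : q ≠ 1) :
    HasDerivAt (fbeta β) (fbetaDeriv β q) q := by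
  have hsq : HasDerivAt (fun x => β / 2 * (2 * x - 1) ^ 2) (2 * β * (2 * q - 1)) q := by
    refine ((((hasDerivAt_id' q).const_mul 2).sub_const 1).fun_pow 2).const_mul (β / 2)
      |>.congr_deriv ?_
    ring
  rw [fbetaDeriv_eq β h0 h1]
  exact (binEnt_eq_binEntropy ▸ hasDerivAt_binEntropy h0 h1).add hsq

lemma hasDerivAt_fbetaDeriv (β : ℝ) (h0 : q ≠ 0) (h1 : q ≠ 1) :
    HasDerivAt (fbetaDeriv β) (fbetaDeriv2 β q) q := by
  have h1' : 1 - q ≠ 0 := sub_ne_zero.2 h1.symm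
  have hlog := (((hasDerivAt_id q).const_sub 1).log h1').sub (hasDerivAt_log h0)
  have hlin := (((hasDerivAt_id q).const_mul 2).sub_const 1).const_mul (2 * β)
  have heq : fbetaDeriv β =ᶠ[𝓝 q] fun x => log (1 - x) - log x + 2 * β * (2 * x - 1) := by
    filter_upwards [isOpen_ne.mem_nhds h0, isOpen_ne.mem_nhds h1] with x hx0 hx1
    exact fbetaDeriv_eq β hx0 hx1
  refine ((hlog.add hlin).congr_deriv ?_).congr_of_eventuallyEq heq
  simp only [fbetaDeriv2, id]
  field_simp
  ring

lemma fbetaDeriv2_strictAntiOn (β : ℝ) : StrictAntiOn (fbetaDeriv2 β) (Ico (1 / 2) 1) := by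
  intro x hx y hy hxy
  have hy0 : 0 < y * (1 - y) := mul_pos (by linarith [hy.1]) (sub_pos.2 hy.2)
  have hyx : y * (1 - y) < x * (1 - x) := by nlinarith [hx.1]
  simp only [fbetaDeriv2]
  linarith [one_div_lt_one_div_of_lt hy0 hyx]

lemma strictConcaveOn_fbetaDeriv (β : ℝ) :
    StrictConcaveOn ℝ (Ico (1 / 2) 1) (fbetaDeriv β) := by
  have hderiv : ∀ x ∈ Ico (1 / 2 : ℝ) 1, HasDerivAt (fbetaDeriv β) (fbetaDeriv2 β x) x :=
    fun x hx => hasDerivAt_fbetaDeriv β (by linarith [hx.1] : (0 : ℝ) < x).ne' hx.2.ne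
  refine StrictAntiOn.strictConcaveOn_of_deriv (convex_Ico _ _) (HasDerivAt.continuousOn hderiv) ?_
  rw [interior_Ico]
  exact ((fbetaDeriv2_strictAntiOn β).mono Ioo_subset_Ico_self).congr
    fun x hx => (hderiv x (Ioo_subset_Ico_self hx)).deriv.symm

lemma exists_fbetaDeriv_pos (hβ : 1 < β) : ∃ q ∈ Ioo (1 / 2) 1, 0 < fbetaDeriv β q :=
  exists_mem_Ioo_pos_of_hasDerivAt (hasDerivAt_fbetaDeriv β (by norm_num) (by norm_num))
    (by norm_num [fbetaDeriv2]; linarith) (fbetaDeriv_half β) (by norm_num)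

lemma exists_fbetaDeriv_neg (hβ : 0 < β) : ∃ q ∈ Ioo (1 / 2) 1, fbetaDeriv β q < 0 := by
  set e := exp (-(2 * β))
  have he0 : 0 < e := exp_pos _
  have he1 : e < 1 := exp_lt_one_iff.2 (by linarith)
  have hq1 : (1 + e)⁻¹ < 1 := inv_lt_one_of_one_lt₀ (by linarith)
  -- the witness solves `(1 - q) / q = e`, so the logarithm contributes exactly `-2β`
  have hratio : (1 - (1 + e)⁻¹) / (1 + e)⁻¹ = e := by field_simp; ring
  refine ⟨(1 + e)⁻¹, ⟨?_, hq1⟩, ?_⟩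
  · rw [one_div, inv_lt_inv₀ (by norm_num) (by positivity)]
    linarith
  · rw [fbetaDeriv, hratio, log_exp]
    nlinarith

lemma exists_fbetaDeriv_eq_zero (hβ : 1 < β) : ∃ q ∈ Ioo (1 / 2) 1, fbetaDeriv β q = 0 := by
  obtain ⟨a, ha, hga⟩ := exists_fbetaDeriv_pos hβ
  obtain ⟨b, hb, hgb⟩ := exists_fbetaDeriv_neg (zero_lt_one.trans hβ)
  have hab : uIcc a b ⊆ Ioo (1 / 2) 1 := ordConnected_Ioo.uIcc_subset ha hb
  have hcont : ContinuousOn (fbetaDeriv β) (uIcc a b) := HasDerivAt.continuousOn fun x hx =>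
    hasDerivAt_fbetaDeriv β (by linarith [(hab hx).1]) (hab hx).2.ne
  obtain ⟨q, hq, hq0⟩ := intermediate_value_uIcc hcont (mem_uIcc_of_ge hgb.le hga.le)
  exact ⟨q, hab hq, hq0⟩

section Root

variable {qp x : ℝ}

lemma fbetaDeriv_pos_of_mem_Ioo (hqp : qp ∈ Ioo (1 / 2) 1) (hroot : fbetaDeriv β qp = 0)
    (hx : x ∈ Ioo (1 / 2) qp) : 0 < fbetaDeriv β x :=
  (strictConcaveOn_fbetaDeriv β).pos_of_eq_zero_of_eq_zero (left_mem_Ico.2 (by norm_num))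
    (Ioo_subset_Ico_self hqp) ⟨hx.1.le, hx.2.trans hqp.2⟩ (fbetaDeriv_half β) hroot hx.1 hx.2

lemma fbetaDeriv_neg_of_mem_Ioo (hqp : qp ∈ Ioo (1 / 2) 1) (hroot : fbetaDeriv β qp = 0)
    (hx : x ∈ Ioo qp 1) : fbetaDeriv β x < 0 :=
  (strictConcaveOn_fbetaDeriv β).neg_of_eq_zero_of_eq_zero (left_mem_Ico.2 (by norm_num))
    (Ioo_subset_Ico_self hqp) ⟨hqp.1.le.trans hx.1.le, hx.2⟩ (fbetaDeriv_half β) hroot hqp.1 hx.1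

lemma eq_of_fbetaDeriv_eq_zero (hqp : qp ∈ Ioo (1 / 2) 1) (hroot : fbetaDeriv β qp = 0)
    (hx : x ∈ Ioo (1 / 2) 1) (hx0 : fbetaDeriv β x = 0) : x = qp := by
  rcases lt_trichotomy x qp with h | h | h
  · exact absurd hx0 (fbetaDeriv_pos_of_mem_Ioo hqp hroot ⟨hx.1, h⟩).ne'
  · exact h
  · exact absurd hx0 (fbetaDeriv_neg_of_mem_Ioo hqp hroot ⟨h, hx.2⟩).ne

lemma fbetaDeriv2_neg (hqp : qp ∈ Ioo (1 / 2) 1) (hroot : fbetaDeriv β qp = 0) :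
    fbetaDeriv2 β qp < 0 := by
  have := (strictConcaveOn_fbetaDeriv β).lt_slope_of_hasDerivAt (left_mem_Ico.2 (by norm_num))
    (Ioo_subset_Ico_self hqp) hqp.1
    (hasDerivAt_fbetaDeriv β (by linarith [hqp.1]) hqp.2.ne)
  rwa [slope_def_field, hroot, fbetaDeriv_half, sub_zero, zero_div] at this

end Root

section Monotonicity

variable {s : Set ℝ}

lemma strictMonoOn_fbeta (hs : Convex ℝ s) (hs01 : s ⊆ Ioo 0 1)
    (hpos : ∀ x ∈ interior s, 0 < fbetaDeriv β x) : StrictMonoOn (fbeta β) s := by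
  have hderiv : ∀ x ∈ s, HasDerivAt (fbeta β) (fbetaDeriv β x) x :=
    fun x hx => hasDerivAt_fbeta β (hs01 hx).1.ne' (hs01 hx).2.ne
  exact strictMonoOn_of_hasDerivWithinAt_pos hs (HasDerivAt.continuousOn hderiv)
    (fun x hx => (hderiv x (interior_subset hx)).hasDerivWithinAt) hpos

lemma strictAntiOn_fbeta (hs : Convex ℝ s) (hs01 : s ⊆ Ioo 0 1)
    (hneg : ∀ x ∈ interior s, fbetaDeriv β x < 0) : StrictAntiOn (fbeta β) s := by
  have hderiv : ∀ x ∈ s, HasDerivAt (fbeta β) (fbetaDeriv β x) x :=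
    fun x hx => hasDerivAt_fbeta β (hs01 hx).1.ne' (hs01 hx).2.ne
  exact strictAntiOn_of_hasDerivWithinAt_neg hs (HasDerivAt.continuousOn hderiv)
    (fun x hx => (hderiv x (interior_subset hx)).hasDerivWithinAt) hneg

variable {a b : ℝ}

lemma strictMonoOn_fbeta_one_sub (h : StrictAntiOn (fbeta β) (Ioo a b)) :
    StrictMonoOn (fbeta β) (Ioo (1 - b) (1 - a)) := by
  intro x hx y hy hxy
  rw [← fbeta_one_sub β x, ← fbeta_one_sub β y]
  exact h ⟨by linarith [hy.2], by linarith [hy.1]⟩ ⟨by linarith [hx.2], by linarith [hx.1]⟩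
    (by linarith)

lemma strictAntiOn_fbeta_one_sub (h : StrictMonoOn (fbeta β) (Ioo a b)) :
    StrictAntiOn (fbeta β) (Ioo (1 - b) (1 - a)) := by
  intro x hx y hy hxy
  rw [← fbeta_one_sub β x, ← fbeta_one_sub β y]
  exact h ⟨by linarith [hy.2], by linarith [hy.1]⟩ ⟨by linarith [hx.2], by linarith [hx.1]⟩
    (by linarith)

end Monotonicity

section Maximizer

variable {qp : ℝ}

lemma strictMonoOn_fbeta_Icc (hqp : qp ∈ Ioo (1 / 2) 1) (hroot : fbetaDeriv β qp = 0) :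
    StrictMonoOn (fbeta β) (Icc (1 / 2) qp) :=
  strictMonoOn_fbeta (convex_Icc _ _) (fun x hx => ⟨by linarith [hx.1], hx.2.trans_lt hqp.2⟩)
    fun x hx => fbetaDeriv_pos_of_mem_Ioo hqp hroot (by rwa [interior_Icc] at hx)

lemma strictAntiOn_fbeta_Ico (hqp : qp ∈ Ioo (1 / 2) 1) (hroot : fbetaDeriv β qp = 0) :
    StrictAntiOn (fbeta β) (Ico qp 1) :=
  strictAntiOn_fbeta (convex_Ico _ _) (fun x hx => ⟨by linarith [hqp.1, hx.1], hx.2⟩)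
    fun x hx => fbetaDeriv_neg_of_mem_Ioo hqp hroot (by rwa [interior_Ico] at hx)

lemma fbeta_le_of_fbetaDeriv_eq_zero (hqp : qp ∈ Ioo (1 / 2) 1) (hroot : fbetaDeriv β qp = 0)
    {α : ℝ} (hα : α ∈ Ioo 0 1) : fbeta β α ≤ fbeta β qp := by
  wlog h : 1 / 2 ≤ α generalizing α
  · rw [← fbeta_one_sub β α]
    exact this ⟨by linarith, by linarith [hα.1]⟩ (by linarith)
  rcases le_total α qp with h' | h'
  · exact (strictMonoOn_fbeta_Icc hqp hroot).monotoneOn ⟨h, h'⟩ ⟨hqp.1.le, le_rfl⟩ h'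
  · exact (strictAntiOn_fbeta_Ico hqp hroot).antitoneOn ⟨le_rfl, hqp.2⟩ ⟨h', hα.2⟩ h'

end Maximizer

/-- For `β > 1`: (i) there is a unique `q⁺ ∈ (1/2,1)` and a unique
`q⁻ ∈ (0,1/2)` with `ln((1-q)/q) + 2β(2q-1) = 0`, and `q⁺ + q⁻ = 1`;
(ii) `f_β` is strictly increasing on `(0,q⁻)`, strictly decreasing on `(q⁻,1/2)`,
strictly increasing on `(1/2,q⁺)`, strictly decreasing on `(q⁺,1)`; in particular
`q⁺` and `q⁻` are the maximizers of `f_β` on `(0,1)`;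
(iii) `f_β''(α) = -1/(α(1-α)) + 4β` is strictly negative at `q⁺` and `q⁻`. -/
theorem stmt3 (β : ℝ) (hβ : 1 < β) :
    ∃ qp qm : ℝ,
      qp ∈ Set.Ioo (1 / 2 : ℝ) 1 ∧ qm ∈ Set.Ioo (0 : ℝ) (1 / 2) ∧
      (Real.log ((1 - qp) / qp) + 2 * β * (2 * qp - 1) = 0) ∧
      (∀ q ∈ Set.Ioo (1 / 2 : ℝ) 1,
        Real.log ((1 - q) / q) + 2 * β * (2 * q - 1) = 0 → q = qp) ∧
      (Real.log ((1 - qm) / qm) + 2 * β * (2 * qm - 1) = 0) ∧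
      (∀ q ∈ Set.Ioo (0 : ℝ) (1 / 2),
        Real.log ((1 - q) / q) + 2 * β * (2 * q - 1) = 0 → q = qm) ∧
      qp + qm = 1 ∧
      StrictMonoOn (fbeta β) (Set.Ioo 0 qm) ∧
      StrictAntiOn (fbeta β) (Set.Ioo qm (1 / 2)) ∧
      StrictMonoOn (fbeta β) (Set.Ioo (1 / 2) qp) ∧
      StrictAntiOn (fbeta β) (Set.Ioo qp 1) ∧
      (∀ α ∈ Set.Ioo (0 : ℝ) 1, fbeta β α ≤ fbeta β qp ∧ fbeta β α ≤ fbeta β qm) ∧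
      (-(1 / (qp * (1 - qp))) + 4 * β < 0) ∧
      (-(1 / (qm * (1 - qm))) + 4 * β < 0) := by
  obtain ⟨qp, hqp, hroot⟩ := exists_fbetaDeriv_eq_zero hβ
  have hmono := (strictMonoOn_fbeta_Icc hqp hroot).mono Ioo_subset_Icc_self
  have hanti := (strictAntiOn_fbeta_Ico hqp hroot).mono Ioo_subset_Ico_self
  have hle := fun α (hα : α ∈ Ioo 0 1) => fbeta_le_of_fbetaDeriv_eq_zero hqp hroot hα
  refine ⟨qp, 1 - qp, hqp, ⟨by linarith [hqp.2], by linarith [hqp.1]⟩, hroot,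
    fun q hq => eq_of_fbetaDeriv_eq_zero hqp hroot hq, ?_, fun q hq hq0 => ?_, by ring,
    ?_, ?_, hmono, hanti, fun α hα => ⟨hle α hα, fbeta_one_sub β qp ▸ hle α hα⟩,
    fbetaDeriv2_neg hqp hroot, ?_⟩
  · show fbetaDeriv β (1 - qp) = 0
    rw [fbetaDeriv_one_sub, hroot, neg_zero]
  · have := eq_of_fbetaDeriv_eq_zero (x := 1 - q) hqp hroot
      ⟨by linarith [hq.2], by linarith [hq.1]⟩ (by rw [fbetaDeriv_one_sub, neg_eq_zero]; exact hq0)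
    linarith
  · simpa only [sub_self] using strictMonoOn_fbeta_one_sub hanti
  · have hhalf : (1 : ℝ) - 1 / 2 = 1 / 2 := by norm_num
    simpa only [hhalf] using strictAntiOn_fbeta_one_sub hmono
  · have := fbetaDeriv2_neg hqp hroot
    rwa [← fbetaDeriv2_one_sub] at this
end

section
/- Let p, q ∈ [0,1] with q ≤ p and p < 0.1, let k ≥ 1 be an integer, and set k̃ = ⌈(k+1)/2⌉. Then ∑_{ℓ=k̃}^{k} (k choose ℓ)·(1−p)^ℓ·q^{k−ℓ} ≥ (7/16)·(1−p+q)^k. -/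
open Finset

private lemma choose_le_two_pow_aux (n r : ℕ) : n.choose r ≤ 2 ^ n := by
  rcases le_or_gt r n with h | h
  · calc n.choose r ≤ ∑ i ∈ Finset.range (n + 1), n.choose i :=
        Finset.single_le_sum (f := fun i => n.choose i) (fun i _ => Nat.zero_le _)
          (Finset.mem_range.2 (Nat.lt_succ_of_le h))
    _ = 2 ^ n := Nat.sum_range_choose n
  · rw [Nat.choose_eq_zero_of_lt h]; exact Nat.zero_le _

/-- For `p, q ∈ [0,1]` with `q ≤ p` and `p < 0.1`, and an integer
`k ≥ 1`, with `k̃ = ⌈(k+1)/2⌉`, one has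
`∑_{ℓ=k̃}^{k} (k choose ℓ)·(1-p)^ℓ·q^{k-ℓ} ≥ (7/16)·(1-p+q)^k`. -/
theorem stmt7 (p q : ℝ) (hp0 : 0 ≤ p) (hp1 : p ≤ 1) (hq0 : 0 ≤ q) (hq1 : q ≤ 1)
    (hqp : q ≤ p) (hp : p < 0.1) (k : ℕ) (hk : 1 ≤ k) :
    (7 / 16 : ℝ) * (1 - p + q) ^ k ≤
      ∑ ℓ ∈ Finset.Icc (⌈((k : ℝ) + 1) / 2⌉₊) k,
        (k.choose ℓ : ℝ) * (1 - p) ^ ℓ * q ^ (k - ℓ) := by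
  set a : ℝ := 1 - p with ha_def
  set b : ℝ := q with hb_def
  have ha : (9 : ℝ) / 10 < a := by rw [ha_def]; norm_num at hp ⊢; linarith
  have hb : b < 1 / 10 := by
    rw [hb_def]; norm_num at hp ⊢; linarith
  have hb0 : 0 ≤ b := hq0
  have ha0 : (0:ℝ) ≤ a := by linarith
  have hba : b ≤ a := by linarith
  have h9ba : 9 * b ≤ a := by linarith
  set t := ⌈((k : ℝ) + 1) / 2⌉₊ with ht_def
  have ht1 : k + 1 ≤ 2 * t := by
    have h := Nat.le_ceil (((k : ℝ) + 1) / 2)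
    rw [← ht_def] at h
    have : ((k : ℝ) + 1) ≤ 2 * t := by linarith
    exact_mod_cast this
  have ht2 : 2 * t ≤ k + 2 := by
    have hr0 : (0:ℝ) ≤ ((k : ℝ) + 1) / 2 := by positivity
    have h := Nat.ceil_lt_add_one hr0
    rw [← ht_def] at h
    have : (2 * t : ℝ) < (k : ℝ) + 3 := by linarith
    have : (2 * t : ℕ) < k + 3 := by exact_mod_cast this
    omega
  have htk : t ≤ k := by omega
  have ht0 : 1 ≤ t := by omega
  set f : ℕ → ℝ := fun ℓ => (k.choose ℓ : ℝ) * a ^ ℓ * b ^ (k - ℓ) with hf_def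
  have hf0 : ∀ ℓ, 0 ≤ f ℓ := by
    intro ℓ
    apply mul_nonneg (mul_nonneg (by positivity) (by positivity)) (by positivity)
  -- total sum
  have htot : (a + b) ^ k = ∑ ℓ ∈ Finset.range (k + 1), f ℓ := by
    rw [add_pow]
    refine Finset.sum_congr rfl fun ℓ _ => by rw [hf_def]; ring
  -- split
  have hsplit : ∑ ℓ ∈ Finset.range (k + 1), f ℓ =
      (∑ ℓ ∈ Finset.Ico 0 (k - t + 1), f ℓ) +
      (∑ ℓ ∈ Finset.Ico (k - t + 1) t, f ℓ) +
      (∑ ℓ ∈ Finset.Ico t (k + 1), f ℓ) := by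
    rw [Finset.range_eq_Ico,
      ← Finset.sum_Ico_consecutive f (Nat.zero_le t) (by omega : t ≤ k + 1),
      ← Finset.sum_Ico_consecutive f (by omega : 0 ≤ k - t + 1) (by omega : k - t + 1 ≤ t)]
  set S := ∑ ℓ ∈ Finset.Ico t (k + 1), f ℓ with hS_def
  set L := ∑ ℓ ∈ Finset.Ico 0 (k - t + 1), f ℓ with hL_def
  set M := ∑ ℓ ∈ Finset.Ico (k - t + 1) t, f ℓ with hM_def
  -- reindex L
  have hLre : L = ∑ ℓ ∈ Finset.Ico t (k + 1), f (k - ℓ) := by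
    rw [hL_def]
    refine Finset.sum_nbij' (fun ℓ => k - ℓ) (fun ℓ => k - ℓ) ?_ ?_ ?_ ?_ ?_
    · intro x hx; simp only [Finset.mem_Ico] at hx ⊢; omega
    · intro x hx; simp only [Finset.mem_Ico] at hx ⊢; omega
    · intro x hx; simp only [Finset.mem_Ico] at hx; show k - (k - x) = x; omega
    · intro x hx; simp only [Finset.mem_Ico] at hx; show k - (k - x) = x; omega
    · intro x hx; simp only [Finset.mem_Ico] at hx
      show f x = f (k - (k - x)); congr 1; omega
  -- termwise 9 f(k-ℓ) ≤ f ℓ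
  have hterm : ∀ ℓ ∈ Finset.Ico t (k + 1), 9 * f (k - ℓ) ≤ f ℓ := by
    intro ℓ hℓ
    simp only [Finset.mem_Ico] at hℓ
    obtain ⟨hℓ1, hℓ2⟩ := hℓ
    have hℓk : ℓ ≤ k := by omega
    set j := k - ℓ with hj_def
    have hjℓ : j + 1 ≤ ℓ := by omega
    obtain ⟨d, hd⟩ : ∃ d, ℓ = j + (d + 1) := ⟨ℓ - j - 1, by omega⟩
    have hcs : k.choose j = k.choose ℓ := by
      rw [hj_def, Nat.choose_symm hℓk]
    have hkj : k - j = ℓ := by omega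
    rw [hf_def]
    simp only [hcs, hkj]
    have hkey : 9 * (a ^ j * b ^ ℓ) ≤ a ^ ℓ * b ^ j := by
      have hae : a ^ ℓ = a ^ j * a ^ (d + 1) := by rw [hd, pow_add]
      have hbe : b ^ ℓ = b ^ j * b ^ (d + 1) := by rw [hd, pow_add]
      rw [hae, hbe]
      have h1 : 9 * b ^ (d + 1) ≤ a ^ (d + 1) := by
        rw [pow_succ, pow_succ]
        calc 9 * (b ^ d * b) = (9 * b) * b ^ d := by ring
          _ ≤ a * a ^ d := by
              apply mul_le_mul h9ba (pow_le_pow_left₀ hb0 hba d) (by positivity) ha0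
          _ = a ^ d * a := by ring
      calc 9 * (a ^ j * (b ^ j * b ^ (d + 1))) = (a ^ j * b ^ j) * (9 * b ^ (d + 1)) := by ring
        _ ≤ (a ^ j * b ^ j) * a ^ (d + 1) := by
            apply mul_le_mul_of_nonneg_left h1 (by positivity)
        _ = a ^ j * a ^ (d + 1) * b ^ j := by ring
    calc 9 * ((k.choose ℓ : ℝ) * a ^ j * b ^ ℓ)
        = (k.choose ℓ : ℝ) * (9 * (a ^ j * b ^ ℓ)) := by ring
      _ ≤ (k.choose ℓ : ℝ) * (a ^ ℓ * b ^ j) := by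
          apply mul_le_mul_of_nonneg_left hkey (by positivity)
      _ = (k.choose ℓ : ℝ) * a ^ ℓ * b ^ j := by ring
  have hL9 : 9 * L ≤ S := by
    rw [hLre, hS_def, Finset.mul_sum]
    exact Finset.sum_le_sum hterm
  have hab0 : (0:ℝ) ≤ a + b := by linarith
  have hT0 : (0:ℝ) ≤ (a + b) ^ k := by positivity
  have hMle : M ≤ (36 / 100) * (a + b) ^ k := by
    rcases eq_or_ne (k - t + 1) t with he | hne
    · rw [hM_def, he, Finset.Ico_self, Finset.sum_empty]; positivity
    · have h2t : 2 * t = k + 2 := by omega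
      have hkt : k - t + 1 = t - 1 := by omega
      set m := t - 1 with hm_def
      have hm1 : 1 ≤ m := by omega
      have hkm : k = 2 * m := by omega
      have hMeq : M = (k.choose m : ℝ) * (a * b) ^ m := by
        rw [hM_def, hkt, show t = m + 1 by omega, Nat.Ico_succ_singleton,
          Finset.sum_singleton]
        simp only [hf_def]
        have : k - m = m := by omega
        rw [this, mul_pow]; ring
      have hC : (k.choose m : ℝ) ≤ 4 ^ m := by
        have h := choose_le_two_pow_aux k m
        have h' : (k.choose m : ℝ) ≤ 2 ^ k := by exact_mod_cast h
        calc (k.choose m : ℝ) ≤ 2 ^ k := h'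
          _ = 4 ^ m := by rw [hkm, pow_mul]; norm_num
      have hab4 : 4 * (a * b) ≤ (36 / 100) * (a + b) ^ 2 := by
        nlinarith [mul_nonneg (show (0:ℝ) ≤ 9 * a - b by linarith)
          (show (0:ℝ) ≤ a - 9 * b by linarith)]
      have hab40 : (0:ℝ) ≤ 4 * (a * b) := by positivity
      calc M = (k.choose m : ℝ) * (a * b) ^ m := hMeq
        _ ≤ 4 ^ m * (a * b) ^ m := by
            apply mul_le_mul_of_nonneg_right hC (by positivity)
        _ = (4 * (a * b)) ^ m := by rw [mul_pow 4 (a * b) m, mul_pow a b m]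
        _ ≤ ((36 / 100) * (a + b) ^ 2) ^ m := pow_le_pow_left₀ hab40 hab4 m
        _ = (36 / 100) ^ m * (a + b) ^ k := by
            rw [mul_pow, ← pow_mul, hkm, Nat.mul_comm]
        _ ≤ (36 / 100) * (a + b) ^ k := by
            apply mul_le_mul_of_nonneg_right _ hT0
            exact pow_le_of_le_one (by norm_num) (by norm_num) (by omega)
  have hfin : (a + b) ^ k = L + M + S := by rw [htot, hsplit]
  have hgoal : ∑ ℓ ∈ Finset.Icc t k, (k.choose ℓ : ℝ) * a ^ ℓ * b ^ (k - ℓ) = S := by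
    rw [hS_def, ← Finset.Ico_add_one_right_eq_Icc]
  rw [hgoal]
  linarith
end

section
/- Let n ≥ 2 be an integer, let S ⊆ {1,…,n} with |S| = t ≤ n−1, let r = n − t, and let β > 0. Define the symmetric real n×n matrix J by J_{ij} = (β/r)·(1 − 1[i∈S]·1[j∈S]), i.e., J = (β/r)·(𝟙𝟙ᵀ − 𝟙_S 𝟙_Sᵀ) where 𝟙 is the all-ones vector and 𝟙_S is the indicator vector of S. Then the eigenvalues of J satisfy β ≤ λ_max(J) − λ_min(J) ≤ β·(1 + 2t/r). -/
/-!
With `c = β / r`, the quadratic form of `J = c (𝟙𝟙ᵀ - 𝟙_S 𝟙_Sᵀ)` is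
`x ↦ c ((∑ i, x i)² - (∑ i ∈ S, x i)²)`, so by Cauchy–Schwarz it lies between `-c t ‖x‖²` and
`c n ‖x‖²`. Every eigenvalue is a Rayleigh quotient, and `λ_max`, `λ_min` bound all Rayleigh
quotients, so the spectrum lies in `[-c t, c n]`, an interval of length `β (1 + 2 t / r)`.
Conversely, the indicator of the complement of `S` has Rayleigh quotient `c r = β`, and
`e_i - e_j` has Rayleigh quotient `≤ 0` because its coordinates sum to zero; hence
`λ_max ≥ β` and `λ_min ≤ 0`.
-/

open Matrix

namespace Matrix.IsHermitian

variable {𝕜 n : Type*} [RCLike 𝕜] [Fintype n] [DecidableEq n] {A : Matrix n n 𝕜}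

theorem star_eigenvectorBasis_dotProduct_mulVec (hA : A.IsHermitian) (i : n) (x : n → 𝕜) :
    star ⇑(hA.eigenvectorBasis i) ⬝ᵥ A *ᵥ x =
      hA.eigenvalues i * (star ⇑(hA.eigenvectorBasis i) ⬝ᵥ x) := by
  have hvecMul : star ⇑(hA.eigenvectorBasis i) ᵥ* A = star (A *ᵥ ⇑(hA.eigenvectorBasis i)) := by
    rw [star_mulVec, hA.eq]
  rw [dotProduct_mulVec, hvecMul, mulVec_eigenvectorBasis, star_smul, smul_dotProduct,
    star_trivial, RCLike.real_smul_eq_coe_mul]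

theorem re_star_dotProduct_mulVec_eq_sum (hA : A.IsHermitian) (x : n → 𝕜) :
    RCLike.re (star x ⬝ᵥ A *ᵥ x) =
      ∑ i, hA.eigenvalues i * ‖star ⇑(hA.eigenvectorBasis i) ⬝ᵥ x‖ ^ 2 := by
  have parseval := (hA.eigenvectorBasis).sum_inner_mul_inner (WithLp.toLp 2 x)
    (WithLp.toLp 2 (A *ᵥ x))
  simp only [EuclideanSpace.inner_eq_star_dotProduct] at parseval
  have hterm (i : n) : ⇑(hA.eigenvectorBasis i) ⬝ᵥ star x *
      (A *ᵥ x ⬝ᵥ star ⇑(hA.eigenvectorBasis i)) =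
      ((hA.eigenvalues i * ‖star ⇑(hA.eigenvectorBasis i) ⬝ᵥ x‖ ^ 2 : ℝ) : 𝕜) := by
    rw [dotProduct_comm (A *ᵥ x), star_eigenvectorBasis_dotProduct_mulVec, dotProduct_comm,
      star_dotProduct, RCLike.star_def, mul_left_comm, RCLike.conj_mul]
    push_cast
    rfl
  rw [dotProduct_comm, ← parseval, Finset.sum_congr rfl fun i _ ↦ hterm i, ← RCLike.ofReal_sum,
    RCLike.ofReal_re]

theorem sum_norm_sq_star_eigenvectorBasis_dotProduct (hA : A.IsHermitian) (x : n → 𝕜) :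
    ∑ i, ‖star ⇑(hA.eigenvectorBasis i) ⬝ᵥ x‖ ^ 2 = RCLike.re (star x ⬝ᵥ x) := by
  have parseval := (hA.eigenvectorBasis).sum_sq_norm_inner_right (WithLp.toLp 2 x)
  simp only [EuclideanSpace.inner_eq_star_dotProduct, dotProduct_comm _ (star _)] at parseval
  rw [parseval, ← inner_self_eq_norm_sq (𝕜 := 𝕜), EuclideanSpace.inner_eq_star_dotProduct,
    dotProduct_comm]

theorem re_star_eigenvectorBasis_dotProduct_self (hA : A.IsHermitian) (i : n) :
    RCLike.re (star ⇑(hA.eigenvectorBasis i) ⬝ᵥ ⇑(hA.eigenvectorBasis i)) = 1 := by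
  rw [dotProduct_comm, ← EuclideanSpace.inner_eq_star_dotProduct, hA.eigenvectorBasis.inner_eq_one,
    RCLike.one_re]

theorem eigenvalues_le_of_forall_re_star_dotProduct_mulVec_le (hA : A.IsHermitian) {c : ℝ}
    (h : ∀ x, RCLike.re (star x ⬝ᵥ A *ᵥ x) ≤ c * RCLike.re (star x ⬝ᵥ x)) (i : n) :
    hA.eigenvalues i ≤ c := by
  simpa [← hA.eigenvalues_eq, hA.re_star_eigenvectorBasis_dotProduct_self] using
    h (hA.eigenvectorBasis i)

theorem le_eigenvalues_of_forall_le_re_star_dotProduct_mulVec (hA : A.IsHermitian) {c : ℝ}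
    (h : ∀ x, c * RCLike.re (star x ⬝ᵥ x) ≤ RCLike.re (star x ⬝ᵥ A *ᵥ x)) (i : n) :
    c ≤ hA.eigenvalues i := by
  simpa [← hA.eigenvalues_eq, hA.re_star_eigenvectorBasis_dotProduct_self] using
    h (hA.eigenvectorBasis i)

theorem re_star_dotProduct_mulVec_le_iSup_eigenvalues_mul (hA : A.IsHermitian) (x : n → 𝕜) :
    RCLike.re (star x ⬝ᵥ A *ᵥ x) ≤ (⨆ i, hA.eigenvalues i) * RCLike.re (star x ⬝ᵥ x) := by
  rw [re_star_dotProduct_mulVec_eq_sum, ← sum_norm_sq_star_eigenvectorBasis_dotProduct hA,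
    Finset.mul_sum]
  exact Finset.sum_le_sum fun i _ ↦ by gcongr; exact le_ciSup (Finite.bddAbove_range _) i

theorem iInf_eigenvalues_mul_le_re_star_dotProduct_mulVec (hA : A.IsHermitian) (x : n → 𝕜) :
    (⨅ i, hA.eigenvalues i) * RCLike.re (star x ⬝ᵥ x) ≤ RCLike.re (star x ⬝ᵥ A *ᵥ x) := by
  rw [re_star_dotProduct_mulVec_eq_sum, ← sum_norm_sq_star_eigenvectorBasis_dotProduct hA,
    Finset.mul_sum]
  exact Finset.sum_le_sum fun i _ ↦ by gcongr; exact ciInf_le (Finite.bddBelow_range _) i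

theorem le_iSup_eigenvalues_of_le_re_star_dotProduct_mulVec (hA : A.IsHermitian) {c : ℝ}
    {x : n → 𝕜} (hx : 0 < RCLike.re (star x ⬝ᵥ x))
    (h : c * RCLike.re (star x ⬝ᵥ x) ≤ RCLike.re (star x ⬝ᵥ A *ᵥ x)) :
    c ≤ ⨆ i, hA.eigenvalues i :=
  le_of_mul_le_mul_right (h.trans (hA.re_star_dotProduct_mulVec_le_iSup_eigenvalues_mul x)) hx

theorem iInf_eigenvalues_le_of_re_star_dotProduct_mulVec_le (hA : A.IsHermitian) {c : ℝ}
    {x : n → 𝕜} (hx : 0 < RCLike.re (star x ⬝ᵥ x))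
    (h : RCLike.re (star x ⬝ᵥ A *ᵥ x) ≤ c * RCLike.re (star x ⬝ᵥ x)) :
    (⨅ i, hA.eigenvalues i) ≤ c :=
  le_of_mul_le_mul_right ((hA.iInf_eigenvalues_mul_le_re_star_dotProduct_mulVec x).trans h) hx

end Matrix.IsHermitian

section OnesMinusBlock

variable {ι : Type*} [DecidableEq ι]

def onesMinusBlock (S : Finset ι) (c : ℝ) : Matrix ι ι ℝ :=
  c • (vecMulVec 1 1 - vecMulVec (fun i ↦ if i ∈ S then 1 else 0) (fun i ↦ if i ∈ S then 1 else 0))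

variable (S : Finset ι) (c : ℝ)

theorem onesMinusBlock_apply (i j : ι) :
    onesMinusBlock S c i j =
      c * (1 - (if i ∈ S then (1 : ℝ) else 0) * (if j ∈ S then (1 : ℝ) else 0)) := by
  simp [onesMinusBlock, vecMulVec_apply]

variable [Fintype ι]

theorem dotProduct_mulVec_onesMinusBlock (x : ι → ℝ) :
    x ⬝ᵥ onesMinusBlock S c *ᵥ x = c * ((∑ i, x i) ^ 2 - (∑ i ∈ S, x i) ^ 2) := by
  set s : ι → ℝ := fun i ↦ if i ∈ S then 1 else 0
  have hs : s ⬝ᵥ x = ∑ i ∈ S, x i := by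
    simp [s, dotProduct, ite_mul, Finset.sum_ite_mem]
  rw [onesMinusBlock, smul_mulVec, sub_mulVec, vecMulVec_mulVec, vecMulVec_mulVec, dotProduct_smul,
    dotProduct_sub, dotProduct_smul, dotProduct_smul, dotProduct_one, one_dotProduct, hs,
    dotProduct_comm x s, hs, smul_eq_mul, op_smul_eq_mul, op_smul_eq_mul]
  ring

variable {c}

theorem dotProduct_mulVec_onesMinusBlock_le (hc : 0 ≤ c) (x : ι → ℝ) :
    x ⬝ᵥ onesMinusBlock S c *ᵥ x ≤ c * Fintype.card ι * (x ⬝ᵥ x) := by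
  have hcs : (∑ i, x i) ^ 2 ≤ Fintype.card ι * (x ⬝ᵥ x) := by
    simpa [dotProduct, sq] using sq_sum_le_card_mul_sum_sq (s := Finset.univ) (f := x)
  rw [dotProduct_mulVec_onesMinusBlock, mul_assoc]
  gcongr
  linarith [sq_nonneg (∑ i ∈ S, x i)]

theorem neg_mul_le_dotProduct_mulVec_onesMinusBlock (hc : 0 ≤ c) (x : ι → ℝ) :
    -(c * S.card) * (x ⬝ᵥ x) ≤ x ⬝ᵥ onesMinusBlock S c *ᵥ x := by
  have hcs : (∑ i ∈ S, x i) ^ 2 ≤ S.card * (x ⬝ᵥ x) := by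
    calc (∑ i ∈ S, x i) ^ 2 ≤ S.card * ∑ i ∈ S, x i ^ 2 := sq_sum_le_card_mul_sum_sq
      _ ≤ S.card * (x ⬝ᵥ x) := by
        gcongr
        simpa [dotProduct, sq] using
          Finset.sum_le_sum_of_subset_of_nonneg (Finset.subset_univ S) fun i _ _ ↦ sq_nonneg (x i)
  rw [dotProduct_mulVec_onesMinusBlock, neg_mul, mul_assoc, neg_le, ← mul_neg]
  gcongr
  linarith [sq_nonneg (∑ i, x i)]

theorem iSup_eigenvalues_onesMinusBlock_le [Nonempty ι] (hc : 0 ≤ c)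
    (hA : (onesMinusBlock S c).IsHermitian) :
    (⨆ i, hA.eigenvalues i) ≤ c * Fintype.card ι :=
  ciSup_le <| hA.eigenvalues_le_of_forall_re_star_dotProduct_mulVec_le fun x ↦ by
    simpa using dotProduct_mulVec_onesMinusBlock_le S hc x

theorem neg_mul_card_le_iInf_eigenvalues_onesMinusBlock [Nonempty ι] (hc : 0 ≤ c)
    (hA : (onesMinusBlock S c).IsHermitian) :
    -(c * S.card) ≤ ⨅ i, hA.eigenvalues i :=
  le_ciInf <| hA.le_eigenvalues_of_forall_le_re_star_dotProduct_mulVec fun x ↦ by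
    simpa using neg_mul_le_dotProduct_mulVec_onesMinusBlock S hc x

theorem mul_card_compl_le_iSup_eigenvalues_onesMinusBlock (hS : Sᶜ.Nonempty)
    (hA : (onesMinusBlock S c).IsHermitian) :
    c * Sᶜ.card ≤ ⨆ i, hA.eigenvalues i := by
  set x : ι → ℝ := fun i ↦ if i ∈ S then 0 else 1
  have hsum : ∑ i, x i = Sᶜ.card := by
    simp [x, Finset.sum_ite, Finset.filter_not, Finset.compl_eq_univ_sdiff]
  have hnorm : x ⬝ᵥ x = Sᶜ.card := by
    rw [← hsum]
    exact Finset.sum_congr rfl fun i _ ↦ by by_cases hi : i ∈ S <;> simp [x, hi]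
  have hsumS : ∑ i ∈ S, x i = 0 := Finset.sum_eq_zero fun i hi ↦ if_pos hi
  refine hA.le_iSup_eigenvalues_of_le_re_star_dotProduct_mulVec (x := x) ?_ ?_ <;>
    simp only [star_trivial, RCLike.re_to_real, hnorm]
  · exact_mod_cast hS.card_pos
  · rw [dotProduct_mulVec_onesMinusBlock, hsum, hsumS]
    exact (by ring : c * Sᶜ.card * Sᶜ.card = c * ((Sᶜ.card : ℝ) ^ 2 - 0 ^ 2)).le

theorem iInf_eigenvalues_onesMinusBlock_nonpos (hι : 1 < Fintype.card ι) (hc : 0 ≤ c)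
    (hA : (onesMinusBlock S c).IsHermitian) :
    (⨅ i, hA.eigenvalues i) ≤ 0 := by
  obtain ⟨i, j, hij⟩ := Fintype.exists_pair_of_one_lt_card hι
  set x : ι → ℝ := Pi.single i 1 - Pi.single j 1
  have hsum : ∑ k, x k = 0 := by simp [x, Finset.sum_sub_distrib]
  have hnorm : x ⬝ᵥ x = 2 := by
    simp [x, dotProduct_sub, hij, hij.symm]; norm_num
  refine hA.iInf_eigenvalues_le_of_re_star_dotProduct_mulVec_le (x := x) (c := 0) ?_ ?_ <;>
    simp only [star_trivial, RCLike.re_to_real, hnorm, zero_mul]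
  · norm_num
  · rw [dotProduct_mulVec_onesMinusBlock, hsum]
    nlinarith [sq_nonneg (∑ k ∈ S, x k)]

end OnesMinusBlock

/-- For `n ≥ 2`, `S ⊆ {1,…,n}` with `|S| = t ≤ n-1`, `r = n - t`,
and `β > 0`, the symmetric matrix `J = (β/r)·(𝟙𝟙ᵀ - 𝟙_S 𝟙_Sᵀ)` has spectral width
`λ_max(J) - λ_min(J)` between `β` and `β·(1 + 2t/r)`. -/
theorem stmt12 {n : ℕ} (hn : 2 ≤ n) (S : Finset (Fin n)) (t : ℕ)
    (ht : S.card = t) (htn : t ≤ n - 1) (β : ℝ) (hβ : 0 < β)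
    (J : Matrix (Fin n) (Fin n) ℝ)
    (hJdef : ∀ i j, J i j =
      (β / ((n - t : ℕ) : ℝ)) *
        (1 - (if i ∈ S then (1 : ℝ) else 0) * (if j ∈ S then (1 : ℝ) else 0)))
    (hJ : J.IsHermitian) :
    β ≤ (⨆ i, hJ.eigenvalues i) - (⨅ i, hJ.eigenvalues i) ∧
    (⨆ i, hJ.eigenvalues i) - (⨅ i, hJ.eigenvalues i) ≤
      β * (1 + 2 * (t : ℝ) / ((n - t : ℕ) : ℝ)) := by
  set r : ℝ := ((n - t : ℕ) : ℝ)
  have hr : 0 < r := by simp only [r]; exact_mod_cast (by omega : 0 < n - t)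
  have hc : 0 ≤ β / r := by positivity
  obtain rfl : J = onesMinusBlock S (β / r) := by
    ext i j; rw [hJdef, onesMinusBlock_apply]
  have : Nonempty (Fin n) := ⟨⟨0, by omega⟩⟩
  have hcompl : Sᶜ.card = n - t := by simp [Finset.card_compl, ht]
  have hmax := iSup_eigenvalues_onesMinusBlock_le S hc hJ
  have hmin := neg_mul_card_le_iInf_eigenvalues_onesMinusBlock S hc hJ
  have hsup := mul_card_compl_le_iSup_eigenvalues_onesMinusBlock S
    (Finset.card_pos.mp (by omega)) hJ
  have hinf := iInf_eigenvalues_onesMinusBlock_nonpos S (by rw [Fintype.card_fin]; omega) hc hJ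
  rw [hcompl, div_mul_cancel₀ β hr.ne'] at hsup
  rw [Fintype.card_fin] at hmax
  rw [ht] at hmin
  have hn_eq : (n : ℝ) = r + t := by
    simp only [r]; push_cast [Nat.cast_sub (by omega : t ≤ n)]; ring
  refine ⟨by linarith, ?_⟩
  calc (⨆ i, hJ.eigenvalues i) - (⨅ i, hJ.eigenvalues i) ≤ β / r * n + β / r * t := by linarith
    _ = β * (1 + 2 * t / r) := by rw [hn_eq]; field_simp; ring
end

section
/- Let Ω be a finite set, let ν be a probability distribution on Ω, let Ψ : Ω → C be a map into a set C, let Λ ⊆ Ω, let k ≥ 1 be an integer, and for each X ∈ Ω^k let A_X be a probability distribution on Ω. For X = (x⁽¹⁾,…,x⁽ᵏ⁾) ∈ Ω^k let S_X = Ψ⁻¹({Ψ(x⁽¹⁾),…,Ψ(x⁽ᵏ⁾)}) ∪ Λ. Suppose that E_{X∼ν^{⊗k}}[ A_X(S_X) ] ≥ 1 − η for some η ∈ [0,1]. Then E_{X∼ν^{⊗k}}[ d_TV(A_X, ν) ] ≥ 1 − η − ν(Λ) − k·max_{c∈C} ν(Ψ⁻¹({c})). -/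
/-!
On each event `S`, two probability distributions differ in mass by at most their total variation
distance, so `d_TV(A_X, ν) ≥ A_X(S_X) - ν(S_X)`. By the union bound, `ν(S_X)` is at most `ν(Λ)`
plus the `k` fibres `ν(Ψ⁻¹(Ψ(x⁽ⁱ⁾)))`, each at most the largest fibre. Averaging over
`X ∼ ν^{⊗k}` gives the theorem.
-/

open Finset

section

variable {ι Ω C : Type*}

theorem sum_sub_sum_le_half_sum_abs_sub [Fintype Ω] [DecidableEq Ω] {p q : Ω → ℝ}
    (h : ∑ y, p y = ∑ y, q y) (S : Finset Ω) :
    ∑ y ∈ S, p y - ∑ y ∈ S, q y ≤ 1 / 2 * ∑ y, |p y - q y| := by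
  have hsplit : ∑ y ∈ S, (p y - q y) + ∑ y ∈ Sᶜ, (p y - q y) = 0 := by
    rw [sum_add_sum_compl, sum_sub_distrib, h, sub_self]
  have hS : ∑ y ∈ S, (p y - q y) ≤ ∑ y ∈ S, |p y - q y| :=
    sum_le_sum fun y _ => le_abs_self _
  have hSc : -∑ y ∈ Sᶜ, (p y - q y) ≤ ∑ y ∈ Sᶜ, |p y - q y| := by
    rw [← sum_neg_distrib]
    exact sum_le_sum fun y _ => neg_le_abs _
  rw [← sum_add_sum_compl S fun y => |p y - q y|, ← sum_sub_distrib]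
  linarith

theorem sum_union_le_add_of_nonneg [DecidableEq Ω] {f : Ω → ℝ} (hf : ∀ y, 0 ≤ f y)
    (s t : Finset Ω) : ∑ y ∈ s ∪ t, f y ≤ ∑ y ∈ s, f y + ∑ y ∈ t, f y := by
  rw [← sum_union_inter]
  exact le_add_of_nonneg_right (sum_nonneg fun y _ => hf y)

theorem sum_sup_le_sum_sum_of_nonneg [DecidableEq Ω] {f : Ω → ℝ} (hf : ∀ y, 0 ≤ f y)
    (t : Finset ι) (s : ι → Finset Ω) : ∑ y ∈ t.sup s, f y ≤ ∑ i ∈ t, ∑ y ∈ s i, f y :=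
  apply_sup_le_sum (f := fun s : Finset Ω => ∑ y ∈ s, f y) sum_empty
    (fun {s t} => sum_union_le_add_of_nonneg hf s t) t

theorem sum_le_sum_add_sum_fibres_of_subset [Fintype Ω] [DecidableEq Ω] [DecidableEq C]
    [Fintype ι] {ν : Ω → ℝ} (hν : ∀ y, 0 ≤ ν y) (Ψ : Ω → C) (Λ : Finset Ω) (x : ι → Ω)
    {S : Finset Ω} (hS : ∀ y ∈ S, y ∈ Λ ∨ ∃ i, Ψ y = Ψ (x i)) :
    ∑ y ∈ S, ν y ≤
      ∑ y ∈ Λ, ν y + ∑ i, ∑ y ∈ univ.filter (fun y' => Ψ y' = Ψ (x i)), ν y := by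
  have hsub : S ⊆ Λ ∪ univ.sup (fun i => univ.filter (fun y' => Ψ y' = Ψ (x i))) := by
    intro y hy
    simpa using hS y hy
  calc ∑ y ∈ S, ν y
      ≤ ∑ y ∈ Λ ∪ univ.sup (fun i => univ.filter (fun y' => Ψ y' = Ψ (x i))), ν y :=
        sum_le_sum_of_subset_of_nonneg hsub fun y _ _ => hν y
    _ ≤ _ := (sum_union_le_add_of_nonneg hν _ _).trans
        (add_le_add_right (sum_sup_le_sum_sum_of_nonneg hν _ _) _)

theorem sum_mul_sub_le_sum_mul_of_sub_le [Fintype ι] {w f g : ι → ℝ} (hw0 : ∀ a, 0 ≤ w a)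
    (hw1 : ∑ a, w a = 1) {c : ℝ} (h : ∀ a, f a - c ≤ g a) :
    ∑ a, w a * f a - c ≤ ∑ a, w a * g a :=
  calc ∑ a, w a * f a - c = ∑ a, w a * (f a - c) := by
        simp only [mul_sub, sum_sub_distrib, ← sum_mul, hw1, one_mul]
    _ ≤ ∑ a, w a * g a := sum_le_sum fun a _ => mul_le_mul_of_nonneg_left (h a) (hw0 a)

end

theorem stmt15_general {Ω C : Type*} [Fintype Ω] [DecidableEq Ω]
    [Fintype C] [Nonempty C] [DecidableEq C]
    (ν : Ω → ℝ) (hν0 : ∀ x, 0 ≤ ν x) (hν1 : ∑ x, ν x = 1)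
    (Ψ : Ω → C) (Λ : Finset Ω) (k : ℕ)
    (A : (Fin k → Ω) → Ω → ℝ)
    (hA1 : ∀ X, ∑ y, A X y = 1)
    (η : ℝ)
    (hmass : 1 - η ≤ ∑ X : Fin k → Ω, (∏ i, ν (X i)) *
      ∑ y ∈ Finset.univ.filter (fun y => (∃ i, Ψ y = Ψ (X i)) ∨ y ∈ Λ), A X y) :
    1 - η - (∑ y ∈ Λ, ν y) -
        (k : ℝ) * Finset.univ.sup' Finset.univ_nonempty
          (fun c => ∑ y ∈ Finset.univ.filter (fun y' => Ψ y' = c), ν y) ≤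
      ∑ X : Fin k → Ω, (∏ i, ν (X i)) * ((1 / 2) * ∑ y, |A X y - ν y|) := by
  set M := Finset.univ.sup' Finset.univ_nonempty
    (fun c => ∑ y ∈ Finset.univ.filter (fun y' => Ψ y' = c), ν y)
  have hM : ∀ c, ∑ y ∈ univ.filter (fun y' => Ψ y' = c), ν y ≤ M :=
    fun c => le_sup' (fun c => ∑ y ∈ univ.filter (fun y' => Ψ y' = c), ν y) (mem_univ c)
  have hweights : ∑ X : Fin k → Ω, ∏ i, ν (X i) = 1 := by
    rw [← Fintype.sum_pow, hν1, one_pow]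
  have hpointwise : ∀ X : Fin k → Ω,
      ∑ y ∈ univ.filter (fun y => (∃ i, Ψ y = Ψ (X i)) ∨ y ∈ Λ), A X y -
        (∑ y ∈ Λ, ν y + k * M) ≤ 1 / 2 * ∑ y, |A X y - ν y| := by
    intro X
    set S := univ.filter (fun y => (∃ i, Ψ y = Ψ (X i)) ∨ y ∈ Λ)
    have htv := sum_sub_sum_le_half_sum_abs_sub (p := A X) (q := ν) (by rw [hA1, hν1]) S
    have hunion : ∑ y ∈ S, ν y ≤ _ := sum_le_sum_add_sum_fibres_of_subset hν0 Ψ Λ X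
      fun y hy => (mem_filter.1 hy).2.symm
    have hfibres : ∑ i, ∑ y ∈ univ.filter (fun y' => Ψ y' = Ψ (X i)), ν y ≤ k * M :=
      (sum_le_sum fun i _ => hM (Ψ (X i))).trans (by simp)
    linarith
  have haverage := sum_mul_sub_le_sum_mul_of_sub_le (fun X => prod_nonneg fun i _ => hν0 (X i))
    hweights hpointwise
  linarith

/-- Let `ν` be a probability distribution on a finite set `Ω`,
`Ψ : Ω → C`, `Λ ⊆ Ω`, `k ≥ 1`, and for each tuple `X ∈ Ω^k` let `A_X` be a
probability distribution on `Ω`. If on average over `X ∼ ν^{⊗k}` the mass that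
`A_X` places on `S_X = Ψ⁻¹(Ψ(X)) ∪ Λ` is at least `1-η`, then
`E_{X∼ν^{⊗k}}[d_TV(A_X, ν)] ≥ 1 - η - ν(Λ) - k·max_{c∈C} ν(Ψ⁻¹({c}))`. -/
theorem stmt15 {Ω C : Type*} [Fintype Ω] [DecidableEq Ω]
    [Fintype C] [Nonempty C] [DecidableEq C]
    (ν : Ω → ℝ) (hν0 : ∀ x, 0 ≤ ν x) (hν1 : ∑ x, ν x = 1)
    (Ψ : Ω → C) (Λ : Finset Ω) (k : ℕ) (hk : 1 ≤ k)
    (A : (Fin k → Ω) → Ω → ℝ)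
    (hA0 : ∀ X y, 0 ≤ A X y) (hA1 : ∀ X, ∑ y, A X y = 1)
    (η : ℝ) (hη0 : 0 ≤ η) (hη1 : η ≤ 1)
    (hmass : 1 - η ≤ ∑ X : Fin k → Ω, (∏ i, ν (X i)) *
      ∑ y ∈ Finset.univ.filter (fun y => (∃ i, Ψ y = Ψ (X i)) ∨ y ∈ Λ), A X y) :
    1 - η - (∑ y ∈ Λ, ν y) -
        (k : ℝ) * Finset.univ.sup' Finset.univ_nonempty
          (fun c => ∑ y ∈ Finset.univ.filter (fun y' => Ψ y' = c), ν y) ≤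
      ∑ X : Fin k → Ω, (∏ i, ν (X i)) * ((1 / 2) * ∑ y, |A X y - ν y|) :=
  stmt15_general ν hν0 hν1 Ψ Λ k A hA1 η hmass
end
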